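/- Let ε₁, ε₀ ∈ ℂ with |ε₁| = 1 and set P(z) = z³ + ε₁z + ε₀. The polynomial P has three pairwise distinct roots z₁, z₂, z₃ with P'(z_j) purely imaginary for j = 1, 2, 3 if and only if either ε₁ = i and ε₀ = (1+i)s, or ε₁ = −i and ε₀ = (1−i)s, for some real s with |s| < √(2/27). Moreover, the endpoint values ε₁ = ±i, ε₀ = ±(1±i)√(2/27) (matching signs) satisfy 4ε₁³ + 27ε₀² = 0, i.e. lie on the discriminant locus Δ = 0. -/

import Mathlib

open Complex

private lemma key15 (a₁ a₂ a₃ b₁ b₂ b₃ : ℝ) (ha : a₁ + a₂ + a₃ = 0) (hb : b₁ + b₂ + b₃ = 0)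
    (him : a₁*b₂ + a₂*b₁ + a₁*b₃ + a₃*b₁ + a₂*b₃ + a₃*b₂ = 1)
    (h1 : a₁^2 = b₁^2) (h2 : a₂^2 = b₂^2) (h3 : a₃^2 = b₃^2) : b₁ = -a₁ := by
  by_contra hne
  have hb1 : b₁ = a₁ := by
    have h0 : (b₁ - a₁) * (b₁ + a₁) = 0 := by linear_combination -h1
    rcases mul_eq_zero.mp h0 with h | h
    · linarith
    · exact absurd (by linarith : b₁ = -a₁) hne
  have ha1 : a₁ ≠ 0 := by
    intro h0
    exact hne (by rw [hb1, h0]; ring)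
  have c2 : b₂ = a₂ ∨ b₂ = -a₂ := by
    have h0 : (b₂ - a₂) * (b₂ + a₂) = 0 := by linear_combination -h2
    rcases mul_eq_zero.mp h0 with h | h
    · exact Or.inl (by linarith)
    · exact Or.inr (by linarith)
  have c3 : b₃ = a₃ ∨ b₃ = -a₃ := by
    have h0 : (b₃ - a₃) * (b₃ + a₃) = 0 := by linear_combination -h3
    rcases mul_eq_zero.mp h0 with h | h
    · exact Or.inl (by linarith)
    · exact Or.inr (by linarith)
  rcases c2 with h2' | h2' <;> rcases c3 with h3' | h3'
  · nlinarith [sq_nonneg a₁, sq_nonneg a₂, sq_nonneg a₃, sq_nonneg (a₁+a₂+a₃)]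
  · nlinarith [sq_nonneg a₁]
  · nlinarith [sq_nonneg a₁]
  · exact ha1 (by linarith)

set_option maxHeartbeats 1000000 in
private lemma fwd15 (σ ε₀ z₁ z₂ z₃ : ℂ) (hσ2 : σ^2 = -1) (hσre : σ.re = 0)
    (h12 : z₁ ≠ z₂) (h13 : z₁ ≠ z₃) (h23 : z₂ ≠ z₃)
    (hfac : ∀ z : ℂ, z^3 + σ*z + ε₀ = (z - z₁)*(z - z₂)*(z - z₃))
    (h1 : (z₁^2).re = 0) (h2 : (z₂^2).re = 0) (h3 : (z₃^2).re = 0) :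
    ∃ s : ℝ, |s| < Real.sqrt (2/27) ∧ ε₀ = (1 + σ)*s := by
  -- Vieta
  have hE3 : z₁*z₂*z₃ = -ε₀ := by linear_combination hfac 0
  have hE2 : z₁*z₂ + z₁*z₃ + z₂*z₃ = σ := by
    linear_combination (hfac (-1) - hfac 1)/2
  have hE1 : z₁ + z₂ + z₃ = 0 := by
    linear_combination (hfac 1 + hfac (-1))/2 - hE3
  set a₁ := z₁.re with ha₁; set a₂ := z₂.re with ha₂; set a₃ := z₃.re with ha₃
  set b₁ := z₁.im with hb₁; set b₂ := z₂.im with hb₂; set b₃ := z₃.im with hb₃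
  set τ := σ.im with hτdef
  have hτ : τ^2 = 1 := by
    have := congrArg Complex.re hσ2
    simp [pow_two, Complex.mul_re, hσre] at this
    nlinarith [this]
  have ha : a₁ + a₂ + a₃ = 0 := by
    have := congrArg Complex.re hE1; simpa using this
  have hb : b₁ + b₂ + b₃ = 0 := by
    have := congrArg Complex.im hE1; simpa using this
  have him0 : a₁*b₂ + a₂*b₁ + a₁*b₃ + a₃*b₁ + a₂*b₃ + a₃*b₂ = τ := by
    have := congrArg Complex.im hE2; simp [Complex.mul_im] at this; linarith
  have hsq : ∀ z : ℂ, (z^2).re = 0 → z.re^2 = (τ*z.im)^2 := by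
    intro z hz
    have : z.re*z.re - z.im*z.im = 0 := by
      simpa [pow_two, Complex.mul_re] using hz
    nlinarith [this, hτ]
  have hb' : τ*b₁ + τ*b₂ + τ*b₃ = 0 := by linear_combination τ*hb
  have him' : a₁*(τ*b₂) + a₂*(τ*b₁) + a₁*(τ*b₃) + a₃*(τ*b₁) + a₂*(τ*b₃) + a₃*(τ*b₂) = 1 := by
    linear_combination τ*him0 + hτ
  have k1 : τ*b₁ = -a₁ :=
    key15 a₁ a₂ a₃ (τ*b₁) (τ*b₂) (τ*b₃) ha hb' him' (hsq z₁ h1) (hsq z₂ h2) (hsq z₃ h3)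
  have k2 : τ*b₂ = -a₂ :=
    key15 a₂ a₁ a₃ (τ*b₂) (τ*b₁) (τ*b₃) (by linarith) (by linarith)
      (by linarith) (hsq z₂ h2) (hsq z₁ h1) (hsq z₃ h3)
  have k3 : τ*b₃ = -a₃ :=
    key15 a₃ a₁ a₂ (τ*b₃) (τ*b₁) (τ*b₂) (by linarith) (by linarith)
      (by linarith) (hsq z₃ h3) (hsq z₁ h1) (hsq z₂ h2)
  have hbb1 : b₁ = -τ*a₁ := by linear_combination τ*k1 - b₁*hτ
  have hbb2 : b₂ = -τ*a₂ := by linear_combination τ*k2 - b₂*hτ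
  have hbb3 : b₃ = -τ*a₃ := by linear_combination τ*k3 - b₃*hτ
  have hz1 : z₁ = (a₁ : ℂ) * (1 - σ) := by
    apply Complex.ext
    · simp [Complex.mul_re, hσre, ha₁]
    · simp [Complex.mul_im, hσre, ← hτdef]
      linarith [hbb1]
  have hz2 : z₂ = (a₂ : ℂ) * (1 - σ) := by
    apply Complex.ext
    · simp [Complex.mul_re, hσre, ha₂]
    · simp [Complex.mul_im, hσre, ← hτdef]
      linarith [hbb2]
  have hz3 : z₃ = (a₃ : ℂ) * (1 - σ) := by
    apply Complex.ext
    · simp [Complex.mul_re, hσre, ha₃]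
    · simp [Complex.mul_im, hσre, ← hτdef]
      linarith [hbb3]
  have ha12 : a₁ ≠ a₂ := fun hcon => h12 (by rw [hz1, hz2, hcon])
  have ha13 : a₁ ≠ a₃ := fun hcon => h13 (by rw [hz1, hz3, hcon])
  have ha23 : a₂ ≠ a₃ := fun hcon => h23 (by rw [hz2, hz3, hcon])
  have hσ0 : σ ≠ 0 := by intro h0; rw [h0] at hσ2; norm_num at hσ2
  -- e₂ relation over ℝ
  have he2 : a₁*a₂ + a₁*a₃ + a₂*a₃ = -(1/2) := by
    have hc : σ * (2*((a₁:ℂ)*a₂ + (a₁:ℂ)*a₃ + (a₂:ℂ)*a₃) + 1) = 0 := by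
      rw [hz1, hz2, hz3] at hE2
      linear_combination -hE2 + ((a₁:ℂ)*a₂ + (a₁:ℂ)*a₃ + (a₂:ℂ)*a₃)*hσ2
    have hc2 := (mul_eq_zero.mp hc).resolve_left hσ0
    have hcc : (a₁:ℂ)*a₂ + (a₁:ℂ)*a₃ + (a₂:ℂ)*a₃ = ((-(1/2) : ℝ) : ℂ) := by
      push_cast
      linear_combination hc2/2
    exact_mod_cast hcc
  refine ⟨2*(a₁*a₂*a₃), ?_, ?_⟩
  · -- bound via discriminant identity
    have hdisc : (a₁-a₂)^2*(a₁-a₃)^2*(a₂-a₃)^2 = 1/2 - 27*(a₁*a₂*a₃)^2 := by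
      linear_combination ((1:ℝ)*a₃ + (2:ℝ)*a₃^3 + (1:ℝ)*a₂ + (4:ℝ)*a₂*a₃^2 + (4:ℝ)*a₂*a₃^4 + (4:ℝ)*a₂^2*a₃ + (5:ℝ)*a₂^2*a₃^3 + (2:ℝ)*a₂^3 + (5:ℝ)*a₂^3*a₃^2 + (4:ℝ)*a₂^4*a₃ + (4:ℝ)*a₁*a₃^4 + (2:ℝ)*a₁*a₂*a₃^3 + (15:ℝ)*a₁*a₂^2*a₃^2 + (2:ℝ)*a₁*a₂^3*a₃ + (4:ℝ)*a₁*a₂^4 + (-3:ℝ)*a₁^2*a₃^3 + (3:ℝ)*a₁^2*a₂*a₃^2 + (3:ℝ)*a₁^2*a₂^2*a₃ + (-3:ℝ)*a₁^2*a₂^3 + (1:ℝ)*a₁^3*a₃^2 + (-2:ℝ)*a₁^3*a₂*a₃ + (1:ℝ)*a₁^3*a₂^2) * ha + ((-1:ℝ) + (-2:ℝ)*a₃^2 + (-4:ℝ)*a₃^4 + (-2:ℝ)*a₂*a₃ + (-8:ℝ)*a₂*a₃^3 + (-2:ℝ)*a₂^2 + (-12:ℝ)*a₂^2*a₃^2 +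 (-8:ℝ)*a₂^3*a₃ + (-4:ℝ)*a₂^4) * he2
    have hpos : 0 < (a₁-a₂)^2*(a₁-a₃)^2*(a₂-a₃)^2 := by
      have d12 : a₁ - a₂ ≠ 0 := sub_ne_zero.mpr ha12
      have d13 : a₁ - a₃ ≠ 0 := sub_ne_zero.mpr ha13
      have d23 : a₂ - a₃ ≠ 0 := sub_ne_zero.mpr ha23
      positivity
    have hlt : (2*(a₁*a₂*a₃))^2 < 2/27 := by nlinarith [hdisc, hpos]
    calc |2*(a₁*a₂*a₃)| = Real.sqrt ((2*(a₁*a₂*a₃))^2) := (Real.sqrt_sq_eq_abs _).symm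
      _ < Real.sqrt (2/27) := Real.sqrt_lt_sqrt (sq_nonneg _) hlt
  · have hE3' := hE3
    rw [hz1, hz2, hz3] at hE3'
    push_cast
    linear_combination hE3' - (a₁:ℂ)*a₂*a₃*(3-σ)*hσ2


private lemma resq15 (σ : ℂ) (hσ2 : σ^2 = -1) (hσre : σ.re = 0) (x : ℝ) :
    (((x:ℂ)*(1-σ))^2).re = 0 := by
  have h : ((x:ℂ)*(1-σ))^2 = (x:ℂ)^2 * (-2*σ) := by
    linear_combination ((x:ℂ)^2)*hσ2
  rw [h]
  simp [Complex.mul_re, hσre, ← Complex.ofReal_pow]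

set_option maxHeartbeats 1000000 in
private lemma bwd15 (σ : ℂ) (hσ2 : σ^2 = -1) (hσre : σ.re = 0) (s : ℝ)
    (hs : |s| < Real.sqrt (2/27)) :
    ∃ z₁ z₂ z₃ : ℂ, z₁ ≠ z₂ ∧ z₁ ≠ z₃ ∧ z₂ ≠ z₃ ∧
      (∀ z : ℂ, z^3 + σ*z + (1+σ)*(s:ℂ) = (z - z₁)*(z - z₂)*(z - z₃)) ∧
      (z₁^2).re = 0 ∧ (z₂^2).re = 0 ∧ (z₃^2).re = 0 := by
  have hs2 : s^2 < 2/27 := by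
    have h1 : |s| ^ 2 < Real.sqrt (2/27) ^ 2 := by
      have := Real.sqrt_nonneg (2/27)
      nlinarith [abs_nonneg s, hs]
    rwa [_root_.sq_abs, Real.sq_sqrt (by norm_num : (2:ℝ)/27 ≥ 0)] at h1
  set c : ℝ := s/2 with hcdef
  have hc : c^2 < 1/54 := by rw [hcdef]; nlinarith [hs2]
  set u : ℝ := Real.sqrt (1/6) with hudef
  have hu2 : u^2 = 1/6 := Real.sq_sqrt (by norm_num)
  have hu0 : 0 < u := Real.sqrt_pos.mpr (by norm_num)
  have hu1 : u ≤ 1 := by nlinarith [hu2, hu0]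
  have hu3 : u^3 = u/6 := by linear_combination u * hu2
  -- endpoint values
  have hcu' : |c| < u/3 := by
    apply abs_lt_of_sq_lt_sq _ (by positivity)
    nlinarith [hc, hu2]
  have hcu : c < u/3 ∧ -(u/3) < c := ⟨(abs_lt.mp hcu').2, (abs_lt.mp hcu').1⟩
  set g : ℝ → ℝ := fun x => x^3 - x/2 - c with hgdef
  have hgc : Continuous g := by fun_prop
  have gm1 : g (-1) = -1/2 - c := by simp [hgdef]; ring
  have gmu : g (-u) = u/3 - c := by simp [hgdef]; linear_combination -hu3
  have gu : g u = -u/3 - c := by simp [hgdef]; linear_combination hu3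
  have g1 : g 1 = 1/2 - c := by simp [hgdef]; ring
  have gmu_pos : 0 < g (-u) := by rw [gmu]; linarith [hcu.1]
  have gu_neg : g u < 0 := by rw [gu]; linarith [hcu.2]
  obtain ⟨x₁, hx₁mem, hgx₁⟩ :=
    intermediate_value_Icc (by linarith : (-1:ℝ) ≤ -u) hgc.continuousOn
      (Set.mem_Icc.mpr ⟨by rw [gm1]; nlinarith [hc], le_of_lt gmu_pos⟩)
  obtain ⟨x₂, hx₂mem, hgx₂⟩ :=
    intermediate_value_Icc' (by linarith : (-u:ℝ) ≤ u) hgc.continuousOn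
      (Set.mem_Icc.mpr ⟨le_of_lt gu_neg, le_of_lt gmu_pos⟩)
  obtain ⟨x₃, hx₃mem, hgx₃⟩ :=
    intermediate_value_Icc (by linarith : (u:ℝ) ≤ 1) hgc.continuousOn
      (Set.mem_Icc.mpr ⟨le_of_lt gu_neg, by rw [g1]; nlinarith [hc]⟩)
  obtain ⟨hx₁l, hx₁r⟩ := Set.mem_Icc.mp hx₁mem
  obtain ⟨hx₂l, hx₂r⟩ := Set.mem_Icc.mp hx₂mem
  obtain ⟨hx₃l, hx₃r⟩ := Set.mem_Icc.mp hx₃mem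
  have hx₁u : x₁ < -u := lt_of_le_of_ne hx₁r (fun h => by rw [h] at hgx₁; linarith [gmu_pos, hgx₁])
  have hx₂u : x₂ < u := lt_of_le_of_ne hx₂r (fun h => by rw [h] at hgx₂; linarith [gu_neg, hgx₂])
  have h12 : x₁ < x₂ := lt_of_lt_of_le hx₁u hx₂l
  have h23 : x₂ < x₃ := lt_of_lt_of_le hx₂u hx₃l
  have h13 : x₁ < x₃ := h12.trans h23
  have e₁ : x₁^3 - x₁/2 - c = 0 := hgx₁
  have e₂ : x₂^3 - x₂/2 - c = 0 := hgx₂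
  have e₃ : x₃^3 - x₃/2 - c = 0 := hgx₃
  have q12 : x₁^2 + x₁*x₂ + x₂^2 = 1/2 := by
    have h0 : (x₁ - x₂) * (x₁^2 + x₁*x₂ + x₂^2 - 1/2) = 0 := by linear_combination e₁ - e₂
    have := (mul_eq_zero.mp h0).resolve_left (sub_ne_zero.mpr h12.ne)
    linarith
  have q13 : x₁^2 + x₁*x₃ + x₃^2 = 1/2 := by
    have h0 : (x₁ - x₃) * (x₁^2 + x₁*x₃ + x₃^2 - 1/2) = 0 := by linear_combination e₁ - e₃
    have := (mul_eq_zero.mp h0).resolve_left (sub_ne_zero.mpr h13.ne)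
    linarith
  have hE1 : x₁ + x₂ + x₃ = 0 := by
    have h0 : (x₂ - x₃) * (x₁ + x₂ + x₃) = 0 := by linear_combination q12 - q13
    have := (mul_eq_zero.mp h0).resolve_left (sub_ne_zero.mpr h23.ne)
    linarith
  have hE2 : x₁*x₂ + x₁*x₃ + x₂*x₃ = -(1/2) := by
    linear_combination -q12 + (x₁ + x₂)*hE1
  have hE3 : x₁*x₂*x₃ = c := by
    linear_combination e₃ - x₃*q12 + x₃*(x₁ + x₂ - x₃)*hE1
  refine ⟨(x₁:ℂ)*(1-σ), (x₂:ℂ)*(1-σ), (x₃:ℂ)*(1-σ), ?_, ?_, ?_, ?_, ?_, ?_, ?_⟩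
  · intro hcon
    exact absurd (by simpa [Complex.mul_re, hσre] using congrArg Complex.re hcon) h12.ne
  · intro hcon
    exact absurd (by simpa [Complex.mul_re, hσre] using congrArg Complex.re hcon) h13.ne
  · intro hcon
    exact absurd (by simpa [Complex.mul_re, hσre] using congrArg Complex.re hcon) h23.ne
  · intro z
    have c1 : ((x₁:ℂ) + x₂ + x₃) = 0 := by exact_mod_cast hE1
    have c2 : ((x₁:ℂ)*x₂ + x₁*x₃ + x₂*x₃) = ((-(1/2) : ℝ) : ℂ) := by exact_mod_cast hE2
    have c3 : ((x₁:ℂ)*x₂*x₃) = ((c : ℝ) : ℂ) := by exact_mod_cast hE3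
    push_cast at c2 c3
    rw [hcdef] at c3
    push_cast at c3
    linear_combination (1-σ)*z^2*c1 - (1-σ)^2*z*c2 + (1-σ)^3*c3
      + (z/2 + (s:ℂ)*(3 - σ)/2)*hσ2
  · exact resq15 σ hσ2 hσre x₁
  · exact resq15 σ hσ2 hσre x₂
  · exact resq15 σ hσ2 hσre x₃

private lemma deriv15 (ε₁ ε₀ w : ℂ) :
    deriv (fun z : ℂ => z ^ 3 + ε₁ * z + ε₀) w = 3*w^2 + ε₁ := by
  have h : HasDerivAt (fun z : ℂ => z ^ 3 + ε₁ * z + ε₀) (3*w^2 + ε₁) w := by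
    have h1 : HasDerivAt (fun z : ℂ => z ^ 3) (3*w^2) w := by
      simpa using hasDerivAt_pow 3 w
    have h2 : HasDerivAt (fun z : ℂ => ε₁ * z) ε₁ w := by
      simpa using (hasDerivAt_id w).const_mul ε₁
    simpa using (h1.add h2).add_const ε₀
  exact h.deriv


/-- For `|ε₁| = 1`, the cubic `P(z) = z³ + ε₁z + ε₀` has three pairwise distinct
roots with all eigenvalues `P'(z_j)` purely imaginary iff `ε₁ = i`,
`ε₀ = (1+i)s` or `ε₁ = −i`, `ε₀ = (1−i)s` with `s` real, `|s| < √(2/27)`.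
The endpoint values `|s| = √(2/27)` lie on the discriminant locus
`4ε₁³ + 27ε₀² = 0`. -/
theorem stmt15 (ε₁ ε₀ : ℂ) (h : ‖ε₁‖ = 1) :
    ((∃ z₁ z₂ z₃ : ℂ, z₁ ≠ z₂ ∧ z₁ ≠ z₃ ∧ z₂ ≠ z₃ ∧
        (∀ z : ℂ, z ^ 3 + ε₁ * z + ε₀ = (z - z₁) * (z - z₂) * (z - z₃)) ∧
        (deriv (fun z : ℂ => z ^ 3 + ε₁ * z + ε₀) z₁).re = 0 ∧
        (deriv (fun z : ℂ => z ^ 3 + ε₁ * z + ε₀) z₂).re = 0 ∧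
        (deriv (fun z : ℂ => z ^ 3 + ε₁ * z + ε₀) z₃).re = 0)
      ↔ ((ε₁ = Complex.I ∧
            ∃ s : ℝ, |s| < Real.sqrt (2 / 27) ∧ ε₀ = (1 + Complex.I) * s) ∨
         (ε₁ = -Complex.I ∧
            ∃ s : ℝ, |s| < Real.sqrt (2 / 27) ∧ ε₀ = (1 - Complex.I) * s))) ∧
    (∀ s : ℝ, s ^ 2 = 2 / 27 →
      4 * Complex.I ^ 3 + 27 * ((1 + Complex.I) * (s : ℂ)) ^ 2 = 0 ∧
      4 * (-Complex.I) ^ 3 + 27 * ((1 - Complex.I) * (s : ℂ)) ^ 2 = 0) := by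
  constructor
  · constructor
    · rintro ⟨z₁, z₂, z₃, h12, h13, h23, hfac, hd1, hd2, hd3⟩
      rw [deriv15] at hd1 hd2 hd3
      have hd1' : 3*(z₁^2).re + ε₁.re = 0 := by
        simpa [Complex.add_re, Complex.mul_re] using hd1
      have hd2' : 3*(z₂^2).re + ε₁.re = 0 := by
        simpa [Complex.add_re, Complex.mul_re] using hd2
      have hd3' : 3*(z₃^2).re + ε₁.re = 0 := by
        simpa [Complex.add_re, Complex.mul_re] using hd3
      have hE3 : z₁*z₂*z₃ = -ε₀ := by linear_combination hfac 0
      have hE2 : z₁*z₂ + z₁*z₃ + z₂*z₃ = ε₁ := by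
        linear_combination (hfac (-1) - hfac 1)/2
      have hE1 : z₁ + z₂ + z₃ = 0 := by
        linear_combination (hfac 1 + hfac (-1))/2 - hE3
      have hsumsq : z₁^2 + z₂^2 + z₃^2 = -2*ε₁ := by
        linear_combination (z₁ + z₂ + z₃)*hE1 - 2*hE2
      have hsumre : (z₁^2).re + (z₂^2).re + (z₃^2).re = -2*ε₁.re := by
        have := congrArg Complex.re hsumsq
        simpa [Complex.add_re, Complex.mul_re] using this
      have hre0 : ε₁.re = 0 := by linarith
      have h1 : (z₁^2).re = 0 := by linarith
      have h2 : (z₂^2).re = 0 := by linarith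
      have h3 : (z₃^2).re = 0 := by linarith
      have him : ε₁.im = 1 ∨ ε₁.im = -1 := by
        have habs : ε₁.re^2 + ε₁.im^2 = 1 := by
          have := Complex.sq_norm ε₁
          rw [h] at this
          simpa [Complex.normSq_apply, pow_two] using this.symm
        have h0 : (ε₁.im - 1)*(ε₁.im + 1) = 0 := by
          rw [hre0] at habs; linear_combination habs
        rcases mul_eq_zero.mp h0 with h' | h'
        · exact Or.inl (by linarith)
        · exact Or.inr (by linarith)
      rcases him with him | him
      · have hε : ε₁ = Complex.I := by
          apply Complex.ext <;> simp [hre0, him]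
        obtain ⟨s, hs, hε₀⟩ := fwd15 Complex.I ε₀ z₁ z₂ z₃ (by simp [Complex.I_sq])
          (by simp) h12 h13 h23 (by rw [hε] at hfac; exact hfac) h1 h2 h3
        exact Or.inl ⟨hε, s, hs, hε₀⟩
      · have hε : ε₁ = -Complex.I := by
          apply Complex.ext <;> simp [hre0, him]
        obtain ⟨s, hs, hε₀⟩ := fwd15 (-Complex.I) ε₀ z₁ z₂ z₃ (by simp [Complex.I_sq])
          (by simp) h12 h13 h23 (by rw [hε] at hfac; exact hfac) h1 h2 h3
        exact Or.inr ⟨hε, s, hs, by rw [hε₀]; ring⟩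
    · rintro (⟨hε, s, hs, hε₀⟩ | ⟨hε, s, hs, hε₀⟩)
      · obtain ⟨z₁, z₂, z₃, h12, h13, h23, hfac, h1, h2, h3⟩ :=
          bwd15 Complex.I (by simp [Complex.I_sq]) (by simp) s hs
        refine ⟨z₁, z₂, z₃, h12, h13, h23, ?_, ?_, ?_, ?_⟩
        · intro z
          rw [hε, hε₀]
          linear_combination hfac z
        · rw [deriv15, hε]
          simp [Complex.add_re, Complex.mul_re, h1]
        · rw [deriv15, hε]
          simp [Complex.add_re, Complex.mul_re, h2]
        · rw [deriv15, hε]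
          simp [Complex.add_re, Complex.mul_re, h3]
      · obtain ⟨z₁, z₂, z₃, h12, h13, h23, hfac, h1, h2, h3⟩ :=
          bwd15 (-Complex.I) (by simp [Complex.I_sq]) (by simp) s hs
        refine ⟨z₁, z₂, z₃, h12, h13, h23, ?_, ?_, ?_, ?_⟩
        · intro z
          rw [hε, hε₀]
          linear_combination hfac z
        · rw [deriv15, hε]
          simp [Complex.add_re, Complex.mul_re, h1]
        · rw [deriv15, hε]
          simp [Complex.add_re, Complex.mul_re, h2]
        · rw [deriv15, hε]
          simp [Complex.add_re, Complex.mul_re, h3]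
  · intro s hs
    have hc : (s:ℂ)^2 = 2/27 := by rw [← Complex.ofReal_pow, hs]; norm_num
    constructor
    · linear_combination 27*(1+Complex.I)^2*hc + (4*Complex.I + 2)*Complex.I_sq
    · linear_combination 27*(1-Complex.I)^2*hc + (2 - 4*Complex.I)*Complex.I_sq
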